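/- Let W be a graph on at most 8 vertices with a C1-drawing (a 1-planar drawing in which any two crossings share at most one endvertex). Then this drawing has at most two crossings. -/

import Mathlib

open Set

/-- A drawing of a simple graph in the plane: vertices are mapped to distinct
points, and every edge is represented by a simple arc between the images of its
endvertices whose interior avoids all vertex points. -/
structure Drawing {V : Type} (G : SimpleGraph V) where
  pos : V → ℝ × ℝ
  pos_inj : Function.Injective pos
  arc : ∀ {u v : V}, G.Adj u v → Path (pos u) (pos v)
  arc_symm : ∀ {u v : V} (h : G.Adj u v), arc h.symm = (arc h).symm
  arc_inj : ∀ {u v : V} (h : G.Adj u v), Function.Injective (arc h)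
  arc_avoid : ∀ {u v : V} (h : G.Adj u v) (w : V) (t : unitInterval),
      arc h t = pos w → t = 0 ∨ t = 1

namespace Drawing

variable {V : Type} {G : SimpleGraph V} (D : Drawing G)

/-- The interior points of the arc representing an edge. -/
def interiorPts {u v : V} (h : G.Adj u v) : Set (ℝ × ℝ) :=
  {p | ∃ t : unitInterval, t ≠ 0 ∧ t ≠ 1 ∧ D.arc h t = p}

/-- The edges whose (open) arc passes through a given point of the plane. -/
def edgesThrough (p : ℝ × ℝ) : Set (Sym2 V) :=
  {e | ∃ u v, ∃ h : G.Adj u v, e = s(u, v) ∧ p ∈ D.interiorPts h}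

/-- A crossing point: a point lying in the interiors of two distinct edges. -/
def IsCrossing (p : ℝ × ℝ) : Prop :=
  ∃ e₁ e₂ : Sym2 V, e₁ ≠ e₂ ∧ e₁ ∈ D.edgesThrough p ∧ e₂ ∈ D.edgesThrough p

/-- The set of crossing points of a drawing. -/
def crossings : Set (ℝ × ℝ) := {p | D.IsCrossing p}

/-- The endvertices of the edges crossing at a point. -/
def ends (p : ℝ × ℝ) : Set V :=
  {w | ∃ e ∈ D.edgesThrough p, w ∈ e}

/-- A (good) 1-planar drawing: each edge is crossed at most once, adjacent
edges never cross, and no point lies in the interior of three edges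
(no edge crosses itself because arcs are injective). -/
structure IsOnePlanar : Prop where
  edge_once : ∀ {u v : V} (h : G.Adj u v),
      (D.crossings ∩ D.interiorPts h).Subsingleton
  no_adj_cross : ∀ {u v x y : V} (h₁ : G.Adj u v) (h₂ : G.Adj x y),
      s(u, v) ≠ s(x, y) → (D.interiorPts h₁ ∩ D.interiorPts h₂).Nonempty →
      ({u, v} : Set V) ∩ {x, y} = ∅
  no_triple : ∀ p : ℝ × ℝ, (D.edgesThrough p).ncard ≤ 2

/-- A `𝒞ᵢ`-drawing: a 1-planar drawing in which any two distinct crossings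
share at most `i` endvertices. -/
def CDrawing (i : ℕ) : Prop :=
  D.IsOnePlanar ∧ ∀ p q : ℝ × ℝ, D.IsCrossing p → D.IsCrossing q → p ≠ q →
    (D.ends p ∩ D.ends q).ncard ≤ i

end Drawing

/-- A graph is 1-planar if it has a 1-planar drawing. -/
def SimpleGraph.OnePlanar {V : Type} (G : SimpleGraph V) : Prop :=
  ∃ D : Drawing G, D.IsOnePlanar

/-- Class `𝒞₀`: the graph has a 1-planar drawing with pairwise
endvertex-disjoint crossings. -/
def SimpleGraph.ClassC0 {V : Type} (G : SimpleGraph V) : Prop :=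
  ∃ D : Drawing G, D.CDrawing 0

/-- Class `𝒞₁`: not of class `𝒞₀`, but the graph has a 1-planar drawing in
which any two crossings share at most one endvertex. -/
def SimpleGraph.ClassC1 {V : Type} (G : SimpleGraph V) : Prop :=
  ¬ G.ClassC0 ∧ ∃ D : Drawing G, D.CDrawing 1

/-- Class `𝒞₂`: 1-planar, not of class `𝒞₀` nor `𝒞₁`, but with a 1-planar
drawing in which any two crossings share at most two endvertices. -/
def SimpleGraph.ClassC2 {V : Type} (G : SimpleGraph V) : Prop :=
  G.OnePlanar ∧ ¬ G.ClassC0 ∧ ¬ G.ClassC1 ∧ ∃ D : Drawing G, D.CDrawing 2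

/-- The join of two graphs: all edges between the two vertex sets are added. -/
def SimpleGraph.joinG {α β : Type} (G : SimpleGraph α) (H : SimpleGraph β) :
    SimpleGraph (α ⊕ β) where
  Adj x y := match x, y with
    | Sum.inl a, Sum.inl a' => G.Adj a a'
    | Sum.inr b, Sum.inr b' => H.Adj b b'
    | Sum.inl _, Sum.inr _ => True
    | Sum.inr _, Sum.inl _ => True
  symm := ⟨by
    rintro (a | b) (a' | b') h <;> simp_all <;> exact h.symm⟩
  loopless := ⟨by
    rintro (a | b) h <;> simp_all⟩

/-!
The two crossing edges at a crossing are non-adjacent, so each crossing has four endvertices.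
Three crossings pairwise sharing at most one endvertex therefore have at least
`3 * 4 - 3 = 9` endvertices in total by the Bonferroni inequality, more than eight vertices allow.
-/

theorem Set.ncard_add_ncard_add_ncard_le {α : Type*} {A B C : Set α} (hA : A.Finite)
    (hB : B.Finite) (hC : C.Finite) :
    A.ncard + B.ncard + C.ncard ≤
      (A ∪ B ∪ C).ncard + (A ∩ B).ncard + (A ∩ C).ncard + (B ∩ C).ncard := by
  have hAB := Set.ncard_union_add_ncard_inter A B hA hB
  have hABC := Set.ncard_union_add_ncard_inter (A ∪ B) C (hA.union hB) hC
  have hinter : ((A ∪ B) ∩ C).ncard ≤ (A ∩ C).ncard + (B ∩ C).ncard := by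
    rw [Set.union_inter_distrib_right]
    exact Set.ncard_union_le _ _
  omega

namespace Drawing

variable {V : Type} {G : SimpleGraph V} (D : Drawing G)

theorem pair_subset_ends {u v : V} (h : G.Adj u v) {p : ℝ × ℝ} (hp : p ∈ D.interiorPts h) :
    ({u, v} : Set V) ⊆ D.ends p := by
  rintro w (rfl | rfl) <;> exact ⟨_, ⟨_, _, h, rfl, hp⟩, by simp⟩

theorem four_le_ncard_ends [Finite V] (hD : D.IsOnePlanar) {p : ℝ × ℝ}
    (hp : D.IsCrossing p) : 4 ≤ (D.ends p).ncard := by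
  obtain ⟨_, _, hne, ⟨u, v, h₁, rfl, hp₁⟩, ⟨x, y, h₂, rfl, hp₂⟩⟩ := hp
  have hdisj : Disjoint ({u, v} : Set V) {x, y} :=
    Set.disjoint_iff_inter_eq_empty.mpr (hD.no_adj_cross h₁ h₂ hne ⟨p, hp₁, hp₂⟩)
  calc 4 = ({u, v} ∪ {x, y} : Set V).ncard := by
        rw [Set.ncard_union_eq hdisj, Set.ncard_pair h₁.ne, Set.ncard_pair h₂.ne]
    _ ≤ (D.ends p).ncard :=
        Set.ncard_le_ncard (Set.union_subset (D.pair_subset_ends h₁ hp₁)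
          (D.pair_subset_ends h₂ hp₂))

end Drawing

/-- A `𝒞₁`-drawing of a graph on at most 8 vertices has at most two crossings. -/
theorem C1Drawing_crossings_le_two {V : Type} [Fintype V] (G : SimpleGraph V)
    (hV : Fintype.card V ≤ 8) (D : Drawing G) (hD : D.CDrawing 1) :
    D.crossings.ncard ≤ 2 := by
  by_contra! hlt
  obtain ⟨p, q, r, hp, hq, hr, hpq, hpr, hqr⟩ :=
    (Set.two_lt_ncard_iff (Set.finite_of_ncard_pos (by omega))).mp hlt
  have hp4 := D.four_le_ncard_ends hD.1 hp
  have hq4 := D.four_le_ncard_ends hD.1 hq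
  have hr4 := D.four_le_ncard_ends hD.1 hr
  have hpq1 := hD.2 p q hp hq hpq
  have hpr1 := hD.2 p r hp hr hpr
  have hqr1 := hD.2 q r hq hr hqr
  have hunion : (D.ends p ∪ D.ends q ∪ D.ends r).ncard ≤ 8 := by
    grw [Set.ncard_le_card, Nat.card_eq_fintype_card, hV]
  have := Set.ncard_add_ncard_add_ncard_le (D.ends p).toFinite (D.ends q).toFinite
    (D.ends r).toFinite
  omega
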